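/- Let C be a coloration of W_τ(X). Then for every class K ⊆ Alg(τ), χ_C^A[Mod CId K] = Mod CId K. -/

import Mathlib

/-!
Common framework: terms of a fixed type `τ = (ar i)_{i : I}`, algebras,
identities, hypersubstitutions, multi-hypersubstitutions and colorations,
following Denecke–Koppitz–Shtrakov, "Multi-hypersubstitutions and colored
solid varieties".
-/

namespace ColoredSolid

/-- Terms of type `τ` (arities `ar`) over the countably infinite
variable set `X = {x₀, x₁, …}` (variables indexed by `ℕ`). -/
inductive Term (I : Type) (ar : I → ℕ) : Type
  | var : ℕ → Term I ar
  | app : (i : I) → (Fin (ar i) → Term I ar) → Term I ar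

variable {I : Type} {ar : I → ℕ}

/-- The set of (indices of) variables occurring in a term. -/
def Term.varSet : Term I ar → Set ℕ
  | .var n => {n}
  | .app _ ts => ⋃ k, (ts k).varSet

/-- Simultaneous substitution of terms for variables. -/
def subst (θ : ℕ → Term I ar) : Term I ar → Term I ar
  | .var n => θ n
  | .app i ts => .app i fun k => subst θ (ts k)

/-- Pad a `Fin (ar i)`-indexed family of terms to a total substitution. -/
def pad {i : I} (g : Fin (ar i) → Term I ar) : ℕ → Term I ar :=
  fun j => if h : j < ar i then g ⟨j, h⟩ else .var j

/-- The extension `σ̂` of a hypersubstitution to all terms. -/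
def hat (σ : (i : I) → Term I ar) : Term I ar → Term I ar
  | .var n => .var n
  | .app i ts => subst (pad fun k => hat σ (ts k)) (σ i)

/-- A hypersubstitution is proper when each `σ(fᵢ)` is an `nᵢ`-ary term,
i.e. uses only the variables `x₀, …, x_{nᵢ-1}`. -/
def Proper (σ : (i : I) → Term I ar) : Prop :=
  ∀ i, ∀ n ∈ (σ i).varSet, n < ar i

/-- `Hyp I ar` : the hypersubstitutions of type `τ`. -/
def Hyp (I : Type) (ar : I → ℕ) : Type := {σ : (i : I) → Term I ar // Proper σ}

/-- The identity hypersubstitution (as a raw function). -/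
def hypIdFun : (i : I) → Term I ar := fun i => .app i fun k => .var k.val

lemma proper_hypIdFun : Proper (hypIdFun (I := I) (ar := ar)) := by
  intro i n hn
  simp only [hypIdFun, Term.varSet, Set.mem_iUnion, Set.mem_singleton_iff] at hn
  obtain ⟨k, rfl⟩ := hn
  exact k.isLt

/-- The identity hypersubstitution `σ_id`. -/
def hypId : Hyp I ar := ⟨hypIdFun, proper_hypIdFun⟩

lemma varSet_subst (θ : ℕ → Term I ar) (t : Term I ar) :
    (subst θ t).varSet ⊆ ⋃ n ∈ t.varSet, (θ n).varSet := by
  induction t with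
  | var n => simp [subst, Term.varSet]
  | app i ts ih =>
    intro m hm
    simp only [subst, Term.varSet, Set.mem_iUnion] at hm
    obtain ⟨k, hk⟩ := hm
    have := ih k hk
    simp only [Set.mem_iUnion, Term.varSet] at this ⊢
    obtain ⟨n, hn1, hn2⟩ := this
    exact ⟨n, ⟨⟨k, hn1⟩, hn2⟩⟩

lemma varSet_hat {σ : (i : I) → Term I ar} (hσ : Proper σ) :
    ∀ t : Term I ar, (hat σ t).varSet ⊆ t.varSet := by
  intro t
  induction t with
  | var n => simp [hat]
  | app i ts ih =>
    intro m hm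
    rw [hat] at hm
    have hmem := varSet_subst _ _ hm
    simp only [Set.mem_iUnion] at hmem
    obtain ⟨n, hn, hm2⟩ := hmem
    have hlt := hσ i n hn
    simp only [pad, dif_pos hlt] at hm2
    have := ih ⟨n, hlt⟩ hm2
    simp only [Term.varSet, Set.mem_iUnion]
    exact ⟨⟨n, hlt⟩, this⟩

/-- Composition of hypersubstitutions (raw functions): `σ₁ ∘ₕ σ₂`. -/
def hypCompFun (σ₁ σ₂ : (i : I) → Term I ar) : (i : I) → Term I ar := fun i => hat σ₁ (σ₂ i)

lemma proper_hypCompFun {σ₁ σ₂ : (i : I) → Term I ar} (h₁ : Proper σ₁) (h₂ : Proper σ₂) :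
    Proper (hypCompFun σ₁ σ₂) :=
  fun i n hn => h₂ i n (varSet_hat h₁ (σ₂ i) hn)

/-- Composition of hypersubstitutions: `σ₁ ∘ₕ σ₂ := σ̂₁ ∘ σ₂`. -/
def hypComp (σ₁ σ₂ : Hyp I ar) : Hyp I ar :=
  ⟨hypCompFun σ₁.val σ₂.val, proper_hypCompFun σ₁.property σ₂.property⟩

/-- `M` is a submonoid of the monoid `Hyp(τ)` of all hypersubstitutions. -/
def IsSubmonoid (M : Set (Hyp I ar)) : Prop :=
  hypId ∈ M ∧ ∀ σ₁ ∈ M, ∀ σ₂ ∈ M, hypComp σ₁ σ₂ ∈ M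

/-- An algebra of type `τ`: a (nonempty) carrier together with an
`nᵢ`-ary operation for every operation symbol `fᵢ`. -/
structure Alg (I : Type) (ar : I → ℕ) where
  carrier : Type
  nonempty : Nonempty carrier
  op : ∀ i, (Fin (ar i) → carrier) → carrier

/-- Evaluation of a term in an algebra under a valuation of the variables. -/
def Alg.eval (A : Alg I ar) (v : ℕ → A.carrier) : Term I ar → A.carrier
  | .var n => v n
  | .app i ts => A.op i fun k => A.eval v (ts k)

/-- Identities `s ≈ t` are pairs of terms. -/
abbrev Eqn (I : Type) (ar : I → ℕ) := Term I ar × Term I ar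

/-- The identity `e` holds in the algebra `A`. -/
def holds (A : Alg I ar) (e : Eqn I ar) : Prop :=
  ∀ v : ℕ → A.carrier, A.eval v e.1 = A.eval v e.2

/-- `Id K` : the identities holding in every algebra of the class `K`. -/
def IdS (K : Set (Alg I ar)) : Set (Eqn I ar) := {e | ∀ A ∈ K, holds A e}

/-- `Mod Σ` : the class of algebras satisfying every identity of `Σ`. -/
def ModS (E : Set (Eqn I ar)) : Set (Alg I ar) := {A | ∀ e ∈ E, holds A e}

/-- `χ_M^E[Σ] = {σ̂[u] ≈ σ̂[v] | u ≈ v ∈ Σ, σ ∈ M}`. -/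
def chiE (M : Set (Hyp I ar)) (E : Set (Eqn I ar)) : Set (Eqn I ar) :=
  {e | ∃ σ ∈ M, ∃ uv ∈ E, e = (hat σ.val uv.1, hat σ.val uv.2)}

/-- The derived algebra `σ(𝒜)` (same carrier, operations `σ(fᵢ)^𝒜`). -/
noncomputable def derive (σ : (i : I) → Term I ar) (A : Alg I ar) : Alg I ar where
  carrier := A.carrier
  nonempty := A.nonempty
  op i args := A.eval
    (fun j => if h : j < ar i then args ⟨j, h⟩ else Classical.choice A.nonempty) (σ i)

/-- `χ_M^A[K] = {σ(𝒜) | 𝒜 ∈ K, σ ∈ M}`. -/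
def chiA (M : Set (Hyp I ar)) (K : Set (Alg I ar)) : Set (Alg I ar) :=
  {B | ∃ σ ∈ M, ∃ A ∈ K, B = derive σ.val A}

/-- `H_M Id K` : the `M`-hyperidentities of the class `K`. -/
def HId (M : Set (Hyp I ar)) (K : Set (Alg I ar)) : Set (Eqn I ar) :=
  {e | ∀ σ ∈ M, (hat σ.val e.1, hat σ.val e.2) ∈ IdS K}

/-- `H_M Mod Σ` : the algebras `M`-hypersatisfying every identity of `Σ`. -/
def HMod (M : Set (Hyp I ar)) (E : Set (Eqn I ar)) : Set (Alg I ar) :=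
  {A | ∀ σ ∈ M, ∀ uv ∈ E, holds A (hat σ.val uv.1, hat σ.val uv.2)}

/-!  Colorations and multi-hypersubstitutions. -/

/-- `addresses t` : the set of addresses of occurrences of operation symbols
in the term `t` (an address is the list of argument positions leading from
the root to the occurrence). -/
def addresses : Term I ar → Set (List ℕ)
  | .var _ => ∅
  | .app i ts => insert [] (⋃ k : Fin (ar i), (fun l => k.val :: l) '' addresses (ts k))

/-- A coloration `C` of `W_τ(X)` assigns to every term `t` a coloration
`α_t` of its addresses (only the values on `addresses t` matter). -/
def Coloration (I : Type) (ar : I → ℕ) : Type := Term I ar → List ℕ → ℕ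

/-- A multi-hypersubstitution is a map `ρ : ℕ → Hyp(τ)`; here, its
underlying raw function is extended to the subterms of a term, tracking the
address of the current subterm, with colors given by `α`. -/
def mhatAux (ρ : ℕ → (i : I) → Term I ar) (α : List ℕ → ℕ) : List ℕ → Term I ar → Term I ar
  | _, .var n => .var n
  | a, .app i ts =>
      subst (pad fun k => mhatAux ρ α (a ++ [k.val]) (ts k)) (ρ (α a) i)

/-- `ρ̂_C[t]` : application of the multi-hypersubstitution `ρ` to the term
`t`, colored by `C`. -/
def mhat (C : Coloration I ar) (ρ : ℕ → Hyp I ar) (t : Term I ar) : Term I ar :=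
  mhatAux (fun n => (ρ n).val) (C t) [] t

/-- `χ_C^e[Σ] = {ρ̂_C[u] ≈ ρ̂_C[v] | u ≈ v ∈ Σ, ρ ∈ Hyp(τ)^ℕ}`. -/
def chiCe (C : Coloration I ar) (E : Set (Eqn I ar)) : Set (Eqn I ar) :=
  {e | ∃ ρ : ℕ → Hyp I ar, ∃ uv ∈ E, e = (mhat C ρ uv.1, mhat C ρ uv.2)}

/-- The iterates `χ_C^{e,n}` of `χ_C^e` (with `χ_C^{e,0} = χ_C^e`). -/
def chiCiter (C : Coloration I ar) : ℕ → Set (Eqn I ar) → Set (Eqn I ar)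
  | 0, E => chiCe C E
  | n + 1, E => chiCe C (chiCiter C n E)

/-- `χ_C^E[Σ] = ⋃ₙ χ_C^{e,n}[Σ]`. -/
def chiCE (C : Coloration I ar) (E : Set (Eqn I ar)) : Set (Eqn I ar) :=
  ⋃ n, chiCiter C n E

/-- The derived algebra `ρ[𝒜]`, with operations
`fᵢ^{ρ[𝒜]} := (ρ̂_C[fᵢ(x₁,…,x_{nᵢ})])^𝒜`. -/
noncomputable def deriveC (C : Coloration I ar) (ρ : ℕ → Hyp I ar) (A : Alg I ar) :
    Alg I ar where
  carrier := A.carrier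
  nonempty := A.nonempty
  op i args := A.eval
    (fun j => if h : j < ar i then args ⟨j, h⟩ else Classical.choice A.nonempty)
    (mhat C ρ (.app i fun k => .var k.val))

/-- `χ_C^A[K] = {ρ[𝒜] | 𝒜 ∈ K, ρ ∈ Hyp(τ)^ℕ}`. -/
def chiCA (C : Coloration I ar) (K : Set (Alg I ar)) : Set (Alg I ar) :=
  {B | ∃ ρ : ℕ → Hyp I ar, ∃ A ∈ K, B = deriveC C ρ A}

/-- `CMod Σ = {𝒜 | χ_C^E[Σ] ⊆ Id 𝒜}`. -/
def CMod (C : Coloration I ar) (E : Set (Eqn I ar)) : Set (Alg I ar) :=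
  {A | chiCE C E ⊆ {e | holds A e}}

/-- `CId K = {s ≈ t | χ_C^E[{s ≈ t}] ⊆ Id K}`. -/
def CId (C : Coloration I ar) (K : Set (Alg I ar)) : Set (Eqn I ar) :=
  {e | chiCE C {e} ⊆ IdS K}

variable {I : Type} {ar : I → ℕ}

/-
A multi-hypersubstitution `ρ` sees a fundamental term `fᵢ(x₁, …, x_{nᵢ})` only through the
colour of its root, so `ρ[𝒜]` is the derived algebra `σ(𝒜)` of a single hypersubstitution `σ`.
Then `t^{σ(𝒜)} = σ̂[t]^𝒜`, and `σ̂` is `ρ̂_C` for the constant multi-hypersubstitution `σ`;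
since `χ_C^E` is closed under one more application of `χ_C^e`, `CId K` is closed under `σ̂`,
hence `Mod CId K` under `σ(-)`. The constant multi-hypersubstitution `σ_id` gives the reverse
inclusion.
-/

lemma subst_var : ∀ t : Term I ar, subst .var t = t
  | .var _ => rfl
  | .app i ts => by
    simp only [subst]
    exact congrArg _ (funext fun k => subst_var (ts k))

lemma pad_var (i : I) : pad (fun k : Fin (ar i) => Term.var (I := I) (ar := ar) k.val) = .var := by
  funext j
  unfold pad
  split <;> rfl

lemma eval_subst (A : Alg I ar) (v : ℕ → A.carrier) (θ : ℕ → Term I ar) :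
    ∀ t, A.eval v (subst θ t) = A.eval (fun n => A.eval v (θ n)) t
  | .var _ => rfl
  | .app i ts => by
    simp only [subst, Alg.eval]
    exact congrArg _ (funext fun k => eval_subst A v θ (ts k))

lemma eval_congr (A : Alg I ar) {v w : ℕ → A.carrier} :
    ∀ t, (∀ n ∈ t.varSet, v n = w n) → A.eval v t = A.eval w t
  | .var n, h => h n rfl
  | .app i ts, h => by
    simp only [Alg.eval]
    exact congrArg _ (funext fun k =>
      eval_congr A (ts k) fun n hn => h n (Set.mem_iUnion.2 ⟨k, hn⟩))

lemma eval_derive {σ : (i : I) → Term I ar} (hσ : Proper σ) (A : Alg I ar)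
    (v : ℕ → A.carrier) : ∀ t, (derive σ A).eval v t = A.eval v (hat σ t)
  | .var _ => rfl
  | .app i ts => by
    change A.eval _ (σ i) = A.eval v (subst _ (σ i))
    rw [eval_subst]
    refine eval_congr A _ fun n hn => ?_
    have hlt := hσ i n hn
    simp only [pad, hlt, ↓reduceDIte]
    exact eval_derive hσ A v (ts ⟨n, hlt⟩)

lemma holds_derive_iff {σ : (i : I) → Term I ar} (hσ : Proper σ) (A : Alg I ar)
    (e : Eqn I ar) : holds (derive σ A) e ↔ holds A (hat σ e.1, hat σ e.2) := by
  unfold holds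
  exact forall_congr' fun (v : ℕ → A.carrier) => by
    rw [eval_derive hσ A v, eval_derive hσ A v]; exact Iff.rfl

lemma derive_mem_modS {σ : Hyp I ar} {E : Set (Eqn I ar)}
    (hE : ∀ e ∈ E, (hat σ.val e.1, hat σ.val e.2) ∈ E) {A : Alg I ar} (hA : A ∈ ModS E) :
    derive σ.val A ∈ ModS E :=
  fun e he => (holds_derive_iff σ.property A e).2 (hA _ (hE e he))

lemma mhatAux_const (σ : (i : I) → Term I ar) (α : List ℕ → ℕ) :
    ∀ (a : List ℕ) (t : Term I ar), mhatAux (fun _ => σ) α a t = hat σ t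
  | _, .var _ => rfl
  | a, .app i ts => by
    rw [mhatAux, hat]
    simp only [mhatAux_const σ α]

lemma mhat_const (C : Coloration I ar) (σ : Hyp I ar) (t : Term I ar) :
    mhat C (fun _ => σ) t = hat σ.val t :=
  mhatAux_const _ _ _ _

def rootHyp (C : Coloration I ar) (ρ : ℕ → Hyp I ar) : Hyp I ar :=
  ⟨fun i => (ρ (C (.app i fun k => .var k.val) [])).val i, fun i => (ρ _).property i⟩

lemma mhat_app_var (C : Coloration I ar) (ρ : ℕ → Hyp I ar) (i : I) :
    mhat C ρ (.app i fun k => .var k.val) = (rootHyp C ρ).val i := by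
  change subst (pad fun k : Fin (ar i) => .var k.val) _ = _
  rw [pad_var, subst_var]
  rfl

lemma deriveC_eq_derive (C : Coloration I ar) (ρ : ℕ → Hyp I ar) (A : Alg I ar) :
    deriveC C ρ A = derive (rootHyp C ρ).val A := by
  simp only [deriveC, derive, mhat_app_var]

lemma derive_hypIdFun (A : Alg I ar) : derive hypIdFun A = A := by
  obtain ⟨carrier, ne, op⟩ := A
  simp only [derive, hypIdFun, Alg.eval, Fin.is_lt, ↓reduceDIte]

lemma deriveC_hypId (C : Coloration I ar) (A : Alg I ar) :
    deriveC C (fun _ => hypId) A = A :=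
  (deriveC_eq_derive C _ A).trans (derive_hypIdFun A)

lemma chiCe_mono (C : Coloration I ar) {E E' : Set (Eqn I ar)} (h : E ⊆ E') :
    chiCe C E ⊆ chiCe C E' := by
  rintro e ⟨ρ, uv, huv, rfl⟩
  exact ⟨ρ, uv, h huv, rfl⟩

lemma chiCiter_mono (C : Coloration I ar) (n : ℕ) {E E' : Set (Eqn I ar)} (h : E ⊆ E') :
    chiCiter C n E ⊆ chiCiter C n E' := by
  induction n with
  | zero => exact chiCe_mono C h
  | succ n ih => exact chiCe_mono C ih

lemma chiCiter_chiCe (C : Coloration I ar) (n : ℕ) (E : Set (Eqn I ar)) :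
    chiCiter C n (chiCe C E) = chiCiter C (n + 1) E := by
  induction n with
  | zero => rfl
  | succ n ih => exact congrArg (chiCe C) ih

lemma chiCE_subset_of_mem_chiCe (C : Coloration I ar) {e e' : Eqn I ar}
    (h : e' ∈ chiCe C {e}) : chiCE C {e'} ⊆ chiCE C {e} := by
  intro x hx
  obtain ⟨n, hn⟩ := Set.mem_iUnion.1 hx
  have := chiCiter_mono C n (Set.singleton_subset_iff.2 h) hn
  rw [chiCiter_chiCe] at this
  exact Set.mem_iUnion.2 ⟨n + 1, this⟩

lemma hat_mem_cId (C : Coloration I ar) (K : Set (Alg I ar)) (σ : Hyp I ar) {e : Eqn I ar}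
    (he : e ∈ CId C K) : (hat σ.val e.1, hat σ.val e.2) ∈ CId C K := by
  refine (chiCE_subset_of_mem_chiCe C ⟨fun _ => σ, e, rfl, ?_⟩).trans he
  simp only [mhat_const]

/-- Proposition 3.14 (ii): `χ_C^A[Mod CId K] = Mod CId K`. -/
theorem chiCA_mod_cId (C : Coloration I ar) (K : Set (Alg I ar)) :
    chiCA C (ModS (CId C K)) = ModS (CId C K) := by
  refine Set.Subset.antisymm ?_ fun A hA => ⟨fun _ => hypId, A, hA, (deriveC_hypId C A).symm⟩
  rintro B ⟨ρ, A, hA, rfl⟩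
  rw [deriveC_eq_derive]
  exact derive_mem_modS (fun e he => hat_mem_cId C K _ he) hA

end ColoredSolid
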